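/- arXiv:cs/0606109 — 2 statements merged into one kernel-verified Lean document; each statement's English description precedes it below -/
import Mathlib

section
/- Let X be a finite set, S a finite set of clustering solutions, and Γ : X × MET(X) × S → [0,∞] a homogeneous and monotone clustering cost function, and define Opt_Γ(X,d) = min_{P ∈ S} Σ_{x∈X} Γ(x,d,P). Let D be a finitely supported probability distribution over metrics ρ on X such that each ρ in the support dominates d and E_D[max_{y≠x} ρ(x,y)/d(x,y)] ≤ K for every x ∈ X, with K ≥ 1 and Opt_Γ(X,d) < ∞. Then: (a) Opt_Γ(X,ρ) ≥ Opt_Γ(X,d) for every ρ in the support of D; and (b) with probability at least 1/2 under D, Opt_Γ(X,ρ) ≤ 2K·Opt_Γ(X,d). -/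
/-!
Part (a) is monotonicity of the cost in the metric. For (b): if `ρ` stretches the distances
from `x` by a factor at most `G`, then `ρ(x, ·) ≤ G · d(x, ·)`, so monotonicity and homogeneity
give `Γ(x, ρ, P) ≤ G · Γ(x, d, P)` for every clustering `P`. Averaging over `D` with
`E[G] ≤ K` and minimising over `P` gives `E[Opt_Γ(X, ρ)] ≤ K · Opt_Γ(X, d)`, and Markov's
inequality finishes.
-/

def IsMetric {X : Type*} (d : X → X → ℝ) : Prop :=
  (∀ x y, 0 ≤ d x y) ∧ (∀ x y, d x y = 0 ↔ x = y) ∧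
  (∀ x y, d x y = d y x) ∧ (∀ x y z, d x z ≤ d x y + d y z)

open ENNReal Finset

namespace IsMetric

variable {X : Type*} {d : X → X → ℝ}

lemma const_mul (hd : IsMetric d) {l : ℝ} (hl : 0 < l) : IsMetric fun a b => l * d a b := by
  obtain ⟨h0, heq, hsymm, htri⟩ := hd
  refine ⟨fun x y => mul_nonneg hl.le (h0 x y), fun x y => ?_, fun x y => by simp only [hsymm x y],
    fun x y z => ?_⟩
  · rw [mul_eq_zero, heq x y]
    simp [hl.ne']
  · nlinarith [htri x y z]

lemma self_eq_zero (hd : IsMetric d) (x : X) : d x x = 0 := (hd.2.1 x x).2 rfl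

lemma pos_of_ne (hd : IsMetric d) {x y : X} (h : x ≠ y) : 0 < d x y :=
  (hd.1 x y).lt_of_ne fun h0 => h ((hd.2.1 x y).1 h0.symm)

end IsMetric

section Stretch

variable {X : Type*} [Finite X] {d ρ : X → X → ℝ}

/-- `max_{y ≠ x} ρ(x,y) / d(x,y)`, which is `0` (an empty supremum in `ℝ`) when `X = {x}`. -/
noncomputable def maxStretch (ρ d : X → X → ℝ) (x : X) : ℝ :=
  ⨆ y : {y : X // y ≠ x}, ρ x y / d x y

lemma div_le_maxStretch (x : X) {y : X} (hy : y ≠ x) : ρ x y / d x y ≤ maxStretch ρ d x :=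
  le_ciSup (Finite.bddAbove_range fun z : {y : X // y ≠ x} => ρ x z / d x z) ⟨y, hy⟩

lemma one_le_maxStretch (hd : IsMetric d) {x y : X} (hy : y ≠ x)
    (hdom : ∀ y, d x y ≤ ρ x y) : 1 ≤ maxStretch ρ d x :=
  ((one_le_div (hd.pos_of_ne hy.symm)).2 (hdom y)).trans (div_le_maxStretch x hy)

lemma le_max_maxStretch_one_mul (hρ : IsMetric ρ) (hd : IsMetric d) (x y : X) :
    ρ x y ≤ max (maxStretch ρ d x) 1 * d x y := by
  rcases eq_or_ne y x with rfl | hy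
  · simp [hρ.self_eq_zero, hd.self_eq_zero]
  · have hpos := hd.pos_of_ne hy.symm
    calc ρ x y = ρ x y / d x y * d x y := by field_simp
      _ ≤ max (maxStretch ρ d x) 1 * d x y := by
        gcongr
        exact (div_le_maxStretch x hy).trans (le_max_left _ _)

/-- Rounding the stretches up to `1` only matters when `X = {x}`, where they are all `0`. -/
lemma sum_mul_max_maxStretch_one_le {ι : Type*} [Fintype ι] (hd : IsMetric d)
    {w : ι → ℝ} {ρ : ι → X → X → ℝ} (hw1 : ∑ i, w i = 1)
    (hdom : ∀ i, w i ≠ 0 → ∀ x y, d x y ≤ ρ i x y) {K : ℝ} (hK : 1 ≤ K) (x : X)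
    (hgrad : ∑ i, w i * maxStretch (ρ i) d x ≤ K) :
    ∑ i, w i * max (maxStretch (ρ i) d x) 1 ≤ K := by
  by_cases hx : ∃ y, y ≠ x
  · obtain ⟨y, hy⟩ := hx
    refine le_of_eq_of_le (sum_congr rfl fun i _ => ?_) hgrad
    rcases eq_or_ne (w i) 0 with hi | hi
    · simp [hi]
    · rw [max_eq_left (one_le_maxStretch hd hy (hdom i hi x))]
  · have : IsEmpty {y : X // y ≠ x} := ⟨fun y => hx ⟨y, y.2⟩⟩
    simpa [maxStretch, Real.iSup_of_isEmpty, hw1] using hK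

end Stretch

section Clustering

variable {X S : Type*} [Fintype X]

def IsHomogeneousCost (Γ : X → (X → X → ℝ) → S → ℝ≥0∞) : Prop :=
  ∀ (x : X) (l : ℝ) (δ : X → X → ℝ) (P : S), 0 < l → IsMetric δ →
    Γ x (fun a b => l * δ a b) P = ENNReal.ofReal l * Γ x δ P

def IsMonotoneCost (Γ : X → (X → X → ℝ) → S → ℝ≥0∞) : Prop :=
  ∀ (x : X) (δ δ' : X → X → ℝ) (P : S), IsMetric δ → IsMetric δ' →
    (∀ y, δ x y ≤ δ' x y) → Γ x δ P ≤ Γ x δ' P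

noncomputable def optCost (Γ : X → (X → X → ℝ) → S → ℝ≥0∞) (δ : X → X → ℝ) : ℝ≥0∞ :=
  ⨅ P : S, ∑ x, Γ x δ P

variable {Γ : X → (X → X → ℝ) → S → ℝ≥0∞} {d ρ : X → X → ℝ}

lemma optCost_mono (hmono : IsMonotoneCost Γ) (hd : IsMetric d) (hρ : IsMetric ρ)
    (hdom : ∀ x y, d x y ≤ ρ x y) : optCost Γ d ≤ optCost Γ ρ :=
  iInf_mono fun P => sum_le_sum fun x _ => hmono x d ρ P hd hρ (hdom x)

lemma cost_le_max_maxStretch_one_mul (hhom : IsHomogeneousCost Γ) (hmono : IsMonotoneCost Γ)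
    (hd : IsMetric d) (hρ : IsMetric ρ) (x : X) (P : S) :
    Γ x ρ P ≤ ENNReal.ofReal (max (maxStretch ρ d x) 1) * Γ x d P := by
  have hl : 0 < max (maxStretch ρ d x) 1 := lt_max_of_lt_right one_pos
  rw [← hhom x _ d P hl hd]
  exact hmono x ρ _ P hρ (hd.const_mul hl) (le_max_maxStretch_one_mul hρ hd x)

variable {ι : Type*} [Fintype ι] {w : ι → ℝ} {ρ : ι → X → X → ℝ} {K : ℝ}

lemma sum_mul_cost_le (hhom : IsHomogeneousCost Γ) (hmono : IsMonotoneCost Γ)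
    (hd : IsMetric d) (hw : ∀ i, 0 ≤ w i) (hw1 : ∑ i, w i = 1)
    (hρ : ∀ i, w i ≠ 0 → IsMetric (ρ i) ∧ ∀ x y, d x y ≤ ρ i x y) (hK : 1 ≤ K)
    (hgrad : ∀ x, ∑ i, w i * maxStretch (ρ i) d x ≤ K) (P : S) :
    ∑ i, ENNReal.ofReal (w i) * ∑ x, Γ x (ρ i) P ≤ ENNReal.ofReal K * ∑ x, Γ x d P := by
  have hterm : ∀ i x, ENNReal.ofReal (w i) * Γ x (ρ i) P ≤
      ENNReal.ofReal (w i * max (maxStretch (ρ i) d x) 1) * Γ x d P := by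
    intro i x
    rcases eq_or_ne (w i) 0 with hi | hi
    · simp [hi]
    · rw [ENNReal.ofReal_mul (hw i), mul_assoc]
      gcongr
      exact cost_le_max_maxStretch_one_mul hhom hmono hd (hρ i hi).1 x P
  calc ∑ i, ENNReal.ofReal (w i) * ∑ x, Γ x (ρ i) P
      ≤ ∑ x, ∑ i, ENNReal.ofReal (w i * max (maxStretch (ρ i) d x) 1) * Γ x d P := by
        simp only [mul_sum]
        rw [sum_comm]
        exact sum_le_sum fun x _ => sum_le_sum fun i _ => hterm i x
    _ = ∑ x, ENNReal.ofReal (∑ i, w i * max (maxStretch (ρ i) d x) 1) * Γ x d P := by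
        refine sum_congr rfl fun x _ => ?_
        rw [← sum_mul, ENNReal.ofReal_sum_of_nonneg fun i _ =>
          mul_nonneg (hw i) (le_max_of_le_right zero_le_one)]
    _ ≤ ∑ x, ENNReal.ofReal K * Γ x d P := by
        gcongr with x
        exact sum_mul_max_maxStretch_one_le hd hw1 (fun i hi => (hρ i hi).2) hK x (hgrad x)
    _ = ENNReal.ofReal K * ∑ x, Γ x d P := (mul_sum _ _ _).symm

lemma sum_mul_optCost_le (hhom : IsHomogeneousCost Γ) (hmono : IsMonotoneCost Γ)
    (hd : IsMetric d) (hw : ∀ i, 0 ≤ w i) (hw1 : ∑ i, w i = 1)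
    (hρ : ∀ i, w i ≠ 0 → IsMetric (ρ i) ∧ ∀ x y, d x y ≤ ρ i x y) (hK : 1 ≤ K)
    (hgrad : ∀ x, ∑ i, w i * maxStretch (ρ i) d x ≤ K) :
    ∑ i, ENNReal.ofReal (w i) * optCost Γ (ρ i) ≤ ENNReal.ofReal K * optCost Γ d :=
  calc ∑ i, ENNReal.ofReal (w i) * optCost Γ (ρ i)
      ≤ ⨅ P, ∑ i, ENNReal.ofReal (w i) * ∑ x, Γ x (ρ i) P :=
        le_iInf fun P => sum_le_sum fun i _ => mul_le_mul_right (iInf_le _ P) _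
    _ ≤ ⨅ P, ENNReal.ofReal K * ∑ x, Γ x d P :=
        iInf_mono (sum_mul_cost_le hhom hmono hd hw hw1 hρ hK hgrad)
    _ = ENNReal.ofReal K * optCost Γ d :=
        (ENNReal.mul_iInf_of_ne (by simp; linarith) ofReal_ne_top).symm

end Clustering

section Markov

variable {ι : Type*} [Fintype ι] {w : ι → ℝ} {b : ι → ℝ≥0∞} {c : ℝ≥0∞}

open Classical in
lemma sum_filter_two_mul_lt_le_half (hw : ∀ i, 0 ≤ w i)
    (hE : ∑ i, ENNReal.ofReal (w i) * b i ≤ c) :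
    ∑ i ∈ univ.filter (fun i => 2 * c < b i), w i ≤ 1 / 2 := by
  set T := univ.filter (fun i => 2 * c < b i)
  have htail : ∑ i ∈ T, ENNReal.ofReal (w i) * b i ≤ c :=
    (sum_le_sum_of_subset (filter_subset _ _)).trans hE
  rcases eq_or_ne c ⊤ with rfl | hc_top
  · simp [T]
  rcases eq_or_ne c 0 with rfl | hc0
  · refine (sum_nonpos fun i hi => ?_).trans (by norm_num)
    have hbi : 0 < b i := by simpa using (mem_filter.mp hi).2
    have : ENNReal.ofReal (w i) * b i = 0 := le_zero_iff.mp
      ((single_le_sum (fun _ _ => zero_le) hi).trans htail)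
    simpa [hbi.ne'] using this
  have hmass : ENNReal.ofReal (∑ i ∈ T, w i) * 2 * c ≤ 1 * c :=
    calc ENNReal.ofReal (∑ i ∈ T, w i) * 2 * c = ∑ i ∈ T, ENNReal.ofReal (w i) * (2 * c) := by
          rw [ENNReal.ofReal_sum_of_nonneg fun i _ => hw i, mul_assoc, sum_mul]
      _ ≤ ∑ i ∈ T, ENNReal.ofReal (w i) * b i :=
          sum_le_sum fun i hi => by gcongr; exact (mem_filter.mp hi).2.le
      _ ≤ 1 * c := by rwa [one_mul]
  rw [ENNReal.mul_le_mul_iff_left hc0 hc_top, ← ENNReal.le_div_iff_mul_le (by simp) (by simp),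
    ENNReal.ofReal_le_iff_le_toReal (by simp)] at hmass
  simpa using hmass

open Classical in
lemma half_le_sum_filter_le_two_mul (hw : ∀ i, 0 ≤ w i) (hw1 : ∑ i, w i = 1)
    (hE : ∑ i, ENNReal.ofReal (w i) * b i ≤ c) :
    1 / 2 ≤ ∑ i ∈ univ.filter (fun i => b i ≤ 2 * c), w i := by
  have hsplit := sum_filter_add_sum_filter_not univ (fun i => b i ≤ 2 * c) w
  simp only [not_le] at hsplit
  linarith [sum_filter_two_mul_lt_le_half hw hE]

end Markov

open Classical in
theorem monotone_clustering_markov_general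
    (X S : Type) [Fintype X]
    (Γ : X → (X → X → ℝ) → S → ENNReal)
    (hhom : ∀ (x : X) (l : ℝ) (δ : X → X → ℝ) (P : S), 0 < l → IsMetric δ →
      Γ x (fun a b => l * δ a b) P = ENNReal.ofReal l * Γ x δ P)
    (hmono : ∀ (x : X) (δ δ' : X → X → ℝ) (P : S), IsMetric δ → IsMetric δ' →
      (∀ y, δ x y ≤ δ' x y) → Γ x δ P ≤ Γ x δ' P)
    (d : X → X → ℝ) (hd : IsMetric d)
    (m : ℕ) (w : Fin m → ℝ) (ρ : Fin m → X → X → ℝ)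
    (hw : ∀ i, 0 ≤ w i) (hw1 : ∑ i, w i = 1)
    (hρ : ∀ i, w i ≠ 0 → IsMetric (ρ i) ∧ ∀ x y, d x y ≤ ρ i x y)
    (K : ℝ) (hK : 1 ≤ K)
    (hgrad : ∀ x : X,
      ∑ i, w i * (⨆ y : {y : X // y ≠ x}, ρ i x y.1 / d x y.1) ≤ K) :
    (∀ i, w i ≠ 0 →
      (⨅ P : S, ∑ x, Γ x d P) ≤ ⨅ P : S, ∑ x, Γ x (ρ i) P) ∧
    ((1 : ℝ) / 2 ≤
      ∑ i ∈ Finset.univ.filter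
        (fun i => (⨅ P : S, ∑ x, Γ x (ρ i) P) ≤
          ENNReal.ofReal (2 * K) * ⨅ P : S, ∑ x, Γ x d P), w i) := by
  refine ⟨fun i hi => optCost_mono hmono hd (hρ i hi).1 (hρ i hi).2, ?_⟩
  have hE := sum_mul_optCost_le hhom hmono hd hw hw1 hρ hK hgrad
  have h2K : ENNReal.ofReal (2 * K) * optCost Γ d = 2 * (ENNReal.ofReal K * optCost Γ d) := by
    rw [ENNReal.ofReal_mul zero_le_two, ENNReal.ofReal_ofNat, mul_assoc]
  have hmarkov := half_le_sum_filter_le_two_mul hw hw1 hE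
  simp only [← h2K] at hmarkov
  exact hmarkov

open Classical in
/-- For a homogeneous monotone clustering cost and a distribution over dominating metrics
with expected maximum gradient at most `K`: (a) each dominating metric in the support has
optimum at least `Opt_Γ(X,d)`; (b) with probability at least `1/2`,
`Opt_Γ(X,ρ) ≤ 2K · Opt_Γ(X,d)`. -/
theorem monotone_clustering_markov
    (X S : Type) [Fintype X] [Fintype S] [Nonempty S]
    (Γ : X → (X → X → ℝ) → S → ENNReal)
    (hhom : ∀ (x : X) (l : ℝ) (δ : X → X → ℝ) (P : S), 0 < l → IsMetric δ →
      Γ x (fun a b => l * δ a b) P = ENNReal.ofReal l * Γ x δ P)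
    (hmono : ∀ (x : X) (δ δ' : X → X → ℝ) (P : S), IsMetric δ → IsMetric δ' →
      (∀ y, δ x y ≤ δ' x y) → Γ x δ P ≤ Γ x δ' P)
    (d : X → X → ℝ) (hd : IsMetric d)
    (m : ℕ) (w : Fin m → ℝ) (ρ : Fin m → X → X → ℝ)
    (hw : ∀ i, 0 ≤ w i) (hw1 : ∑ i, w i = 1)
    (hρ : ∀ i, w i ≠ 0 → IsMetric (ρ i) ∧ ∀ x y, d x y ≤ ρ i x y)
    (K : ℝ) (hK : 1 ≤ K)
    (hgrad : ∀ x : X,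
      ∑ i, w i * (⨆ y : {y : X // y ≠ x}, ρ i x y.1 / d x y.1) ≤ K)
    (hfin : (⨅ P : S, ∑ x, Γ x d P) ≠ ⊤) :
    (∀ i, w i ≠ 0 →
      (⨅ P : S, ∑ x, Γ x d P) ≤ ⨅ P : S, ∑ x, Γ x (ρ i) P) ∧
    ((1 : ℝ) / 2 ≤
      ∑ i ∈ Finset.univ.filter
        (fun i => (⨅ P : S, ∑ x, Γ x (ρ i) P) ≤
          ENNReal.ofReal (2 * K) * ⨅ P : S, ∑ x, Γ x d P), w i) :=
  monotone_clustering_markov_general X S Γ hhom hmono d hd m w ρ hw hw1 hρ K hK hgrad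
end

section
/- There exists a universal constant c > 0 such that for every n > 3 the following holds. Let D be any finitely supported probability distribution over pairs (T, f), where (T, d_T) is a finite metric space satisfying the four-point condition and f : C_n → T is non-contractive with respect to the cycle metric. Then there exists y ∈ Z/nZ such that the expectation over D of |∇f(y)|_∞ = max_{z ≠ y} d_T(f(y),f(z))/d_{C_n}(y,z) is at least c·log n. -/
/-- `ρ` satisfies the four-point condition (tree metric). -/
def FourPointCond {X : Type*} (ρ : X → X → ℝ) : Prop :=
  ∀ w x y z, ρ w x + ρ y z ≤ max (ρ w y + ρ x z) (ρ w z + ρ x y)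

/-- The shortest-path metric of the unweighted `n`-cycle on `ZMod n`. -/
def cycleDist (n : ℕ) (i j : ZMod n) : ℝ := (min (i - j).val (j - i).val : ℕ)

/-!
In a four-point metric, `gromovProduct d p z q = (z|q)_p` is the position of the projection of `z`
on the geodesic `[p, q]` and `gromovProduct d z p q = (p|q)_z` is the distance from `z` to it.
If a non-contractive closed path `x 0, …, x n = x 0` had all steps shorter than `E = m / 6`,
`m = ⌊n/2⌋`, both arcs from `x 0` to `x m` would cross every level of the geodesic `[x 0, x m]`
within `E` of it, at points `3E`-close in the tree and hence on the cycle, either across `m` or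
across `0`. They meet across `m` at the top level, and the lowest level where they still do leads
to a contradiction. So some edge `(v, v + 1)` has length `2ℓ ≥ m / 6`; then every `y` has gradient
at least `ℓ / (d(y, v) + 1)`, the harmonic sum gives `∑ y, ∇f(y) ≥ ℓ log (n + 1) ≥ n log n / 48`,
and averaging over the distribution finishes the proof.
-/

open Finset

section IsMetric

variable {X : Type*} {d : X → X → ℝ}

lemma IsMetric.apply_self (hd : IsMetric d) (x : X) : d x x = 0 :=
  (hd.2.1 x x).2 rfl

lemma IsMetric.symm (hd : IsMetric d) (x y : X) : d x y = d y x :=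
  hd.2.2.1 x y

lemma IsMetric.triangle (hd : IsMetric d) (x y z : X) : d x z ≤ d x y + d y z :=
  hd.2.2.2 x y z

end IsMetric

section CycleDist

variable {n : ℕ}

lemma cycleDist_comm (a b : ZMod n) : cycleDist n a b = cycleDist n b a := by
  simp only [cycleDist, min_comm]

lemma cycleDist_le_val_sub (a b : ZMod n) : cycleDist n a b ≤ (a - b).val := by
  unfold cycleDist
  exact_mod_cast min_le_left _ _

lemma cycleDist_add_one_le (a : ZMod n) : cycleDist n a (a + 1) ≤ 1 := by
  rw [cycleDist_comm]
  refine (cycleDist_le_val_sub _ _).trans ?_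
  rw [add_sub_cancel_left, ZMod.val_one_eq_one_mod]
  exact_mod_cast Nat.mod_le 1 n

lemma cycleDist_eq_natAbs_valMinAbs [NeZero n] (a b : ZMod n) :
    cycleDist n a b = (a - b).valMinAbs.natAbs := by
  rw [ZMod.valMinAbs_natAbs_eq_min, cycleDist, ← neg_sub a b, ZMod.neg_val]
  split_ifs with h <;> simp [h]

lemma cycleDist_triangle [NeZero n] (a b c : ZMod n) :
    cycleDist n a c ≤ cycleDist n a b + cycleDist n b c := by
  simp only [cycleDist_eq_natAbs_valMinAbs]
  have := (ZMod.natAbs_valMinAbs_add_le (a - b) (b - c)).trans (Int.natAbs_add_le _ _)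
  rw [sub_add_sub_cancel] at this
  exact_mod_cast this

lemma cycleDist_pos [NeZero n] {a b : ZMod n} (h : a ≠ b) : 0 < cycleDist n a b := by
  rw [cycleDist_eq_natAbs_valMinAbs]
  simpa [sub_eq_zero] using h

lemma cycleDist_natCast [NeZero n] {s t : ℕ} (hst : s ≤ t) (hts : t ≤ s + n) :
    cycleDist n s t = min ((t : ℝ) - s) (n - (t - s)) := by
  rw [cycleDist_comm, cycleDist_eq_natAbs_valMinAbs, ZMod.valMinAbs_natAbs_eq_min,
    ← Nat.cast_sub hst, ZMod.val_natCast, ← Nat.cast_sub hst]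
  obtain h | h : t - s < n ∨ t - s = n := by omega
  · rw [Nat.mod_eq_of_lt h]
    push_cast [h.le]
    rfl
  · rw [h, Nat.mod_self]
    simp

end CycleDist

section GromovProduct

variable {T : Type*} {d : T → T → ℝ}

noncomputable def gromovProduct (d : T → T → ℝ) (w x y : T) : ℝ := (d w x + d w y - d x y) / 2

lemma gromovProduct_nonneg (hd : IsMetric d) (w x y : T) : 0 ≤ gromovProduct d w x y := by
  have := hd.triangle x w y
  rw [hd.symm x w] at this
  unfold gromovProduct
  linarith

lemma gromovProduct_le (hd : IsMetric d) (w x y : T) : gromovProduct d w x y ≤ d w y := by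
  have := hd.triangle w y x
  rw [hd.symm y x] at this
  unfold gromovProduct
  linarith

lemma gromovProduct_base_left (hd : IsMetric d) (w x : T) : gromovProduct d w w x = 0 := by
  simp [gromovProduct, hd.apply_self]

lemma gromovProduct_self (hd : IsMetric d) (w x : T) : gromovProduct d w x x = d w x := by
  simp only [gromovProduct, hd.apply_self]
  ring

lemma gromovProduct_base_right (hd : IsMetric d) (w x : T) : gromovProduct d x w x = 0 := by
  simp only [gromovProduct, hd.apply_self, hd.symm x w]
  ring

lemma FourPointCond.le_dist_of_gromovProduct_lt (hd : IsMetric d) (h4 : FourPointCond d)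
    {p q x y : T} (h : gromovProduct d p y q < gromovProduct d p x q) :
    gromovProduct d x p q + gromovProduct d y p q +
      (gromovProduct d p x q - gromovProduct d p y q) ≤ d x y := by
  have := h4 p x y q
  simp only [gromovProduct, hd.symm x p, hd.symm y p] at h ⊢
  rcases le_max_iff.1 this with h' | h' <;> linarith

lemma FourPointCond.dist_le_gromovProduct (hd : IsMetric d) (h4 : FourPointCond d)
    (p q x y : T) :
    d x y ≤ gromovProduct d x p q + gromovProduct d y p q +
      |gromovProduct d p x q - gromovProduct d p y q| := by
  have := h4 p q x y
  have := le_abs_self (gromovProduct d p x q - gromovProduct d p y q)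
  have := neg_abs_le (gromovProduct d p x q - gromovProduct d p y q)
  simp only [gromovProduct, hd.symm x p, hd.symm y p, hd.symm q x, hd.symm q y] at *
  rcases le_max_iff.1 ‹_ ≤ max _ _› with h' | h' <;> linarith

def IsNearLevel (d : T → T → ℝ) (p q : T) (E r : ℝ) (z : T) : Prop :=
  r - E < gromovProduct d p z q ∧ gromovProduct d p z q < r ∧ gromovProduct d z p q < E

lemma FourPointCond.isNearLevel_of_dist_lt (hd : IsMetric d) (h4 : FourPointCond d)
    {p q x y : T} {E r : ℝ} (hy : gromovProduct d p y q < r) (hx : r ≤ gromovProduct d p x q)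
    (hxy : d x y < E) : IsNearLevel d p q E r y := by
  have := h4.le_dist_of_gromovProduct_lt hd (hy.trans_le hx)
  have := gromovProduct_nonneg hd x p q
  have := gromovProduct_nonneg hd y p q
  exact ⟨by linarith, hy, by linarith⟩

lemma FourPointCond.dist_lt_of_isNearLevel (hd : IsMetric d) (h4 : FourPointCond d)
    {p q z z' : T} {E r : ℝ} (hz : IsNearLevel d p q E r z) (hz' : IsNearLevel d p q E r z') :
    d z z' < 3 * E := by
  have := h4.dist_le_gromovProduct hd p q z z'
  have : |gromovProduct d p z q - gromovProduct d p z' q| < E := by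
    rw [abs_sub_lt_iff]
    constructor <;> linarith [hz.1, hz.2.1, hz'.1, hz'.2.1]
  linarith [hz.2.2, hz'.2.2]

lemma FourPointCond.exists_isNearLevel (hd : IsMetric d) (h4 : FourPointCond d) {p q : T}
    {E r : ℝ} (y : ℕ → T) {k : ℕ} (hE : ∀ t < k, d (y t) (y (t + 1)) < E)
    (h0 : gromovProduct d p (y 0) q < r) (hk : r ≤ gromovProduct d p (y k) q) :
    ∃ s < k, IsNearLevel d p q E r (y s) := by
  induction k with
  | zero => exact absurd hk (not_le.2 h0)
  | succ k ih =>
    by_cases h : r ≤ gromovProduct d p (y k) q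
    · obtain ⟨s, hs, hnear⟩ := ih (fun t ht => hE t (by omega)) h
      exact ⟨s, by omega, hnear⟩
    · refine ⟨k, by omega, h4.isNearLevel_of_dist_lt hd (not_le.1 h) hk ?_⟩
      rw [hd.symm]
      exact hE k (by omega)

end GromovProduct

section TreeCycle

variable {T : Type*} {d : T → T → ℝ} {n m : ℕ} {x : ℕ → T} {E r : ℝ}

lemma FourPointCond.exists_isNearLevel_pair (hd : IsMetric d) (h4 : FourPointCond d)
    (hmn : m < n) (hxn : x n = x 0) (hE : ∀ t < n, d (x t) (x (t + 1)) < E)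
    (hr : 0 < r) (hrL : r ≤ d (x 0) (x m)) :
    ∃ s u, s < m ∧ m < u ∧ u ≤ n ∧
      IsNearLevel d (x 0) (x m) E r (x s) ∧ IsNearLevel d (x 0) (x m) E r (x u) := by
  have h0 : gromovProduct d (x 0) (x 0) (x m) < r := by
    rwa [gromovProduct_base_left hd]
  have hm : r ≤ gromovProduct d (x 0) (x m) (x m) := by
    rwa [gromovProduct_self hd]
  obtain ⟨s, hs, hsnear⟩ := h4.exists_isNearLevel hd x (fun t ht => hE t (by omega)) h0 hm
  obtain ⟨s', hs', hs'near⟩ := h4.exists_isNearLevel hd (k := n - m) (fun t => x (n - t))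
    (fun t ht => by
      rw [hd.symm, show n - t = n - (t + 1) + 1 by omega]
      exact hE _ (by omega))
    (by rwa [Nat.sub_zero, hxn]) (by rwa [Nat.sub_sub_self hmn.le])
  exact ⟨s, n - s', hs, by omega, by omega, hsnear, hs'near⟩

def HasCrossingsAcrossMid (d : T → T → ℝ) (x : ℕ → T) (n m : ℕ) (E r : ℝ) : Prop :=
  ∃ s u, s < m ∧ m < u ∧ u ≤ n ∧
    IsNearLevel d (x 0) (x m) E r (x s) ∧ IsNearLevel d (x 0) (x m) E r (x u) ∧
    (u : ℝ) - s < 3 * E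

lemma FourPointCond.hasCrossingsAcrossMid_or (hd : IsMetric d) (h4 : FourPointCond d)
    (hmn : m < n) (hxn : x n = x 0) (hE : ∀ t < n, d (x t) (x (t + 1)) < E)
    (hx : ∀ s t, s ≤ t → t ≤ n → min ((t : ℝ) - s) (n - (t - s)) ≤ d (x s) (x t))
    (hr : 0 < r) (hrL : r ≤ d (x 0) (x m)) :
    HasCrossingsAcrossMid d x n m E r ∨
      ∃ s < m, (s : ℝ) < 3 * E ∧ IsNearLevel d (x 0) (x m) E r (x s) := by
  obtain ⟨s, u, hs, hu, hun, hsnear, hunear⟩ :=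
    h4.exists_isNearLevel_pair hd hmn hxn hE hr hrL
  rcases min_lt_iff.1 ((hx s u (by omega) hun).trans_lt
    (h4.dist_lt_of_isNearLevel hd hsnear hunear)) with h | h
  · exact Or.inl ⟨s, u, hs, hu, hun, hsnear, hunear, h⟩
  · have : (u : ℝ) ≤ n := by exact_mod_cast hun
    exact Or.inr ⟨s, hs, by linarith, hsnear⟩

lemma FourPointCond.hasCrossingsAcrossMid_top (hd : IsMetric d) (h4 : FourPointCond d)
    (hm : 0 < m) (hmn : 2 * m ≤ n) (hxn : x n = x 0) (hE : ∀ t < n, d (x t) (x (t + 1)) < E)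
    (hx : ∀ s t, s ≤ t → t ≤ n → min ((t : ℝ) - s) (n - (t - s)) ≤ d (x s) (x t))
    (hEm : 5 * E < m) : HasCrossingsAcrossMid d x n m E (d (x 0) (x m)) := by
  have hmR : (2 * m : ℝ) ≤ n := by exact_mod_cast hmn
  have hL : (m : ℝ) ≤ d (x 0) (x m) :=
    (le_min (by simp) (by push_cast; linarith)).trans (hx 0 m (by omega) (by omega))
  have hm0 : (0 : ℝ) < m := by exact_mod_cast hm
  refine (h4.hasCrossingsAcrossMid_or hd (by omega) hxn hE hx (by linarith)
    le_rfl).resolve_right ?_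
  rintro ⟨s, hs, hs3, hsnear⟩
  have hsm := h4.dist_le_gromovProduct hd (x 0) (x m) (x s) (x m)
  rw [gromovProduct_base_right hd, gromovProduct_self hd] at hsm
  have : |gromovProduct d (x 0) (x s) (x m) - d (x 0) (x m)| < E := by
    rw [abs_sub_lt_iff]
    constructor <;> linarith [hsnear.1, hsnear.2.1]
  have hsR : (s : ℝ) < m := by exact_mod_cast hs
  rcases min_le_iff.1 (hx s m hs.le (by omega)) with h | h <;> linarith [hsnear.2.2]

theorem FourPointCond.exists_long_edge (hd : IsMetric d) (h4 : FourPointCond d) (hm : 0 < m)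
    (hmn : 2 * m ≤ n) (hxn : x n = x 0)
    (hx : ∀ s t, s ≤ t → t ≤ n → min ((t : ℝ) - s) (n - (t - s)) ≤ d (x s) (x t)) :
    ∃ t < n, (m : ℝ) / 6 ≤ d (x t) (x (t + 1)) := by
  classical
  by_contra! hE
  set E : ℝ := m / 6 with hEdef
  have hmR : (2 * m : ℝ) ≤ n := by exact_mod_cast hmn
  have hE0 : 0 < E := by positivity
  -- Take the lowest level at which the crossings meet across `m`; just below it they meet
  -- across `0`, and the crossing found there is too close to the witness `u₁` in the tree.
  obtain ⟨t₁, ht₁, hmin⟩ := exists_min_image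
    ((range (n + 1)).filter fun t =>
      HasCrossingsAcrossMid d x n m E (gromovProduct d (x 0) (x t) (x m)))
    (fun t => gromovProduct d (x 0) (x t) (x m))
    ⟨m, mem_filter.2 ⟨mem_range.2 (by omega), by
      rw [gromovProduct_self hd]
      exact h4.hasCrossingsAcrossMid_top hd hm hmn hxn hE hx (by linarith)⟩⟩
  obtain ⟨s₁, u₁, hs₁, hu₁, hu₁n, -, hu₁near, hsu₁⟩ := (mem_filter.1 ht₁).2
  have hs₁R : (s₁ : ℝ) < m := by exact_mod_cast hs₁
  have hu₁R : (m : ℝ) < u₁ := by exact_mod_cast hu₁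
  have hpos : 2 * E < gromovProduct d (x 0) (x u₁) (x m) := by
    have h0u := h4.dist_le_gromovProduct hd (x 0) (x m) (x 0) (x u₁)
    rw [gromovProduct_base_left hd, zero_sub, abs_neg,
      abs_of_nonneg (gromovProduct_nonneg hd _ _ _)] at h0u
    rcases min_le_iff.1 (hx 0 u₁ (by omega) hu₁n) with h | h <;> push_cast at h <;>
      linarith [hu₁near.2.2]
  obtain ⟨s₀, hs₀, hs₀3, hs₀near⟩ := (h4.hasCrossingsAcrossMid_or hd (by omega) hxn hE hx
      (by linarith) (gromovProduct_le hd (x 0) (x u₁) (x m))).resolve_left fun hP => by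
    have := hmin u₁ (mem_filter.2 ⟨mem_range.2 (by omega), hP⟩)
    linarith [hu₁near.2.1]
  have hsu := h4.dist_le_gromovProduct hd (x 0) (x m) (x s₀) (x u₁)
  have : |gromovProduct d (x 0) (x s₀) (x m) - gromovProduct d (x 0) (x u₁) (x m)| < E := by
    rw [abs_sub_lt_iff]
    constructor <;> linarith [hs₀near.1, hs₀near.2.1]
  rcases min_le_iff.1 (hx s₀ u₁ (by omega) hu₁n) with h | h <;>
    linarith [hs₀near.2.2, hu₁near.2.2]

end TreeCycle

section MaxGradient

variable {n : ℕ} {T : Type*}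

noncomputable def maxGradient (d : T → T → ℝ) (f : ZMod n → T) (y : ZMod n) : ℝ :=
  ⨆ z : {z : ZMod n // z ≠ y}, d (f y) (f z) / cycleDist n y z

lemma div_cycleDist_le_maxGradient [NeZero n] (d : T → T → ℝ) (f : ZMod n → T) {y z : ZMod n}
    (h : z ≠ y) : d (f y) (f z) / cycleDist n y z ≤ maxGradient d f y :=
  le_ciSup (f := fun z : {z // z ≠ y} => d (f y) (f z) / cycleDist n y z)
    (Set.finite_range _).bddAbove ⟨z, h⟩

lemma div_cycleDist_add_one_le_maxGradient [NeZero n] {d : T → T → ℝ} (hd : IsMetric d)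
    (f : ZMod n → T) {v : ZMod n} {ℓ : ℝ} (hℓ : 0 < ℓ) (hv : 2 * ℓ ≤ d (f v) (f (v + 1)))
    (y : ZMod n) : ℓ / (cycleDist n y v + 1) ≤ maxGradient d f y := by
  obtain ⟨z, hvz, hz⟩ : ∃ z, cycleDist n v z ≤ 1 ∧ ℓ ≤ d (f y) (f z) := by
    by_cases h : ℓ ≤ d (f y) (f v)
    · exact ⟨v, by simp [cycleDist], h⟩
    · refine ⟨v + 1, cycleDist_add_one_le v, ?_⟩
      have := hd.triangle (f v) (f y) (f (v + 1))
      rw [hd.symm (f v) (f y)] at this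
      linarith
  have hzy : z ≠ y := by
    rintro rfl
    rw [hd.apply_self] at hz
    linarith
  calc ℓ / (cycleDist n y v + 1)
      ≤ d (f y) (f z) / cycleDist n y z :=
        div_le_div₀ (by linarith) hz (cycleDist_pos hzy.symm)
          ((cycleDist_triangle y v z).trans (by linarith))
    _ ≤ maxGradient d f y := div_cycleDist_le_maxGradient d f hzy

lemma log_add_one_le_sum_inv_cycleDist_add_one [NeZero n] (v : ZMod n) :
    Real.log (n + 1) ≤ ∑ y : ZMod n, (cycleDist n y v + 1)⁻¹ := by
  have hsum_val : ∑ i ∈ range n, ((i : ℝ) + 1)⁻¹ = ∑ y : ZMod n, ((y.val : ℝ) + 1)⁻¹ := by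
    obtain ⟨k, rfl⟩ : ∃ k, n = k + 1 := Nat.exists_eq_add_one.2 (NeZero.pos n)
    exact (Fin.sum_univ_eq_sum_range (fun i => ((i : ℝ) + 1)⁻¹) (k + 1)).symm
  calc Real.log (n + 1) ≤ harmonic n := by exact_mod_cast log_add_one_le_harmonic n
    _ = ∑ i ∈ range n, ((i : ℝ) + 1)⁻¹ := by simp [harmonic]
    _ = ∑ y : ZMod n, ((y.val : ℝ) + 1)⁻¹ := hsum_val
    _ = ∑ y : ZMod n, (((y - v).val : ℝ) + 1)⁻¹ :=
        ((Equiv.subRight v).sum_comp fun y => ((y.val : ℝ) + 1)⁻¹).symm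
    _ ≤ ∑ y : ZMod n, (cycleDist n y v + 1)⁻¹ := sum_le_sum fun y _ =>
        inv_anti₀ (by unfold cycleDist; positivity) (by linarith [cycleDist_le_val_sub y v])

lemma mul_log_add_one_le_sum_maxGradient [NeZero n] {d : T → T → ℝ} (hd : IsMetric d)
    (f : ZMod n → T) {v : ZMod n} {ℓ : ℝ} (hℓ : 0 < ℓ) (hv : 2 * ℓ ≤ d (f v) (f (v + 1))) :
    ℓ * Real.log (n + 1) ≤ ∑ y, maxGradient d f y :=
  calc ℓ * Real.log (n + 1)
      ≤ ℓ * ∑ y : ZMod n, (cycleDist n y v + 1)⁻¹ :=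
        mul_le_mul_of_nonneg_left (log_add_one_le_sum_inv_cycleDist_add_one v) hℓ.le
    _ ≤ ∑ y, maxGradient d f y := by
      rw [mul_sum]
      exact sum_le_sum fun y _ => div_cycleDist_add_one_le_maxGradient hd f hℓ hv y

end MaxGradient

theorem FourPointCond.le_sum_maxGradient {T : Type*} {d : T → T → ℝ} (hd : IsMetric d)
    (h4 : FourPointCond d) {n : ℕ} [NeZero n] (hn : 2 ≤ n) (f : ZMod n → T)
    (hf : ∀ a b, cycleDist n a b ≤ d (f a) (f b)) :
    n * Real.log n / 48 ≤ ∑ y, maxGradient d f y := by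
  obtain ⟨t, -, ht⟩ := h4.exists_long_edge hd (n := n) (m := n / 2) (x := fun t => f t) (by omega)
    (by omega) (by simp) fun s t hst htn => by
      rw [← cycleDist_natCast hst (by omega)]
      exact hf s t
  have hℓ : (0 : ℝ) < (n / 2 : ℕ) / 12 := by
    have : 0 < n / 2 := by omega
    positivity
  have hsum := mul_log_add_one_le_sum_maxGradient hd f (v := (t : ZMod n)) hℓ
    (by push_cast at ht ⊢; linarith)
  have hn4 : (n : ℝ) ≤ 4 * (n / 2 : ℕ) := by exact_mod_cast (by omega : n ≤ 4 * (n / 2))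
  have hlog : Real.log n ≤ Real.log (n + 1) := Real.log_le_log (by positivity) (by linarith)
  have hlog0 : 0 ≤ Real.log n := Real.log_nonneg (by exact_mod_cast (by omega : 1 ≤ n))
  calc (n : ℝ) * Real.log n / 48 ≤ 4 * (n / 2 : ℕ) * Real.log n / 48 := by gcongr
    _ ≤ (n / 2 : ℕ) / 12 * Real.log (n + 1) := by
      linarith [mul_le_mul_of_nonneg_left hlog hℓ.le]
    _ ≤ ∑ y, maxGradient d f y := hsum

lemma exists_le_sum_mul_of_le_sum {ι κ : Type*} [Fintype ι] [Fintype κ] [Nonempty κ]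
    {w : ι → ℝ} (hw : ∀ i, 0 ≤ w i) (hw1 : ∑ i, w i = 1) {g : ι → κ → ℝ} {B : ℝ}
    (hg : ∀ i, w i ≠ 0 → Fintype.card κ * B ≤ ∑ k, g i k) :
    ∃ k, B ≤ ∑ i, w i * g i k := by
  obtain ⟨k, -, hk⟩ := exists_le_of_sum_le univ_nonempty <| calc
    ∑ _k : κ, B = ∑ i, w i * (Fintype.card κ * B) := by
      rw [← sum_mul, hw1, one_mul, sum_const, card_univ, nsmul_eq_mul]
    _ ≤ ∑ i, w i * ∑ k, g i k := sum_le_sum fun i _ => by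
      rcases eq_or_ne (w i) 0 with h | h
      · simp [h]
      · exact mul_le_mul_of_nonneg_left (hg i h) (hw i)
    _ = ∑ k, ∑ i, w i * g i k := by
      simp_rw [mul_sum]
      exact sum_comm
  exact ⟨k, hk⟩

/-- There is a universal `c > 0` such that for every `n > 3` and every finitely supported
distribution over non-contractive embeddings of the `n`-cycle into finite tree metrics,
some point has expected maximum gradient at least `c log n`. -/
theorem cycle_tree_max_gradient_lower_bound :
    ∃ c : ℝ, 0 < c ∧
      ∀ (n : ℕ), 3 < n →
        ∀ (m : ℕ) (w : Fin m → ℝ) (T : Fin m → Type)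
          (dT : ∀ i, T i → T i → ℝ) (f : ∀ i, ZMod n → T i),
          (∀ i, 0 ≤ w i) → (∑ i, w i = 1) →
          (∀ i, w i ≠ 0 →
            Finite (T i) ∧ IsMetric (dT i) ∧ FourPointCond (dT i) ∧
            ∀ a b : ZMod n, cycleDist n a b ≤ dT i (f i a) (f i b)) →
          ∃ y : ZMod n,
            c * Real.log n ≤
              ∑ i, w i * (⨆ z : {z : ZMod n // z ≠ y},
                dT i (f i y) (f i z.1) / cycleDist n y z.1) := by
  refine ⟨1 / 48, by norm_num, fun n hn m w T dT f hw hw1 hsupp => ?_⟩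
  have : NeZero n := ⟨by omega⟩
  refine exists_le_sum_mul_of_le_sum hw hw1 (g := fun i => maxGradient (dT i) (f i)) fun i hi => ?_
  obtain ⟨-, hd, h4, hf⟩ := hsupp i hi
  rw [ZMod.card]
  linarith [h4.le_sum_maxGradient hd (by omega) (f i) hf]
end
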